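/- arXiv:2511.06340 — 2 statements merged into one kernel-verified Lean document; each statement's English description precedes it below -/
import Mathlib

section
/- Let Q : {0,1}^n → ℝ be a function, let x* ∈ {0,1}^n, let L ∈ ℝ satisfy L ≤ Q(x) for all x ∈ {0,1}^n, and let q ∈ ℝ satisfy L ≤ q ≤ Q(x*) (for instance, q being the terminal lower bound obtained by terminating the mixed-integer subproblem at x* before optimality is proven). Then the non-supporting no-good optimality cut is valid: for every x ∈ {0,1}^n, Q(x) ≥ q + (L − q) · Δ(x, x*). -/
open Finset

/-- The no-good distance term `Δ(x, x*) = Σ_{j : x*_j = 0} x_j + Σ_{j : x*_j = 1} (1 − x_j)`. -/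
noncomputable def ngDelta {n : ℕ} (x xs : Fin n → ℝ) : ℝ :=
  ∑ j ∈ Finset.univ.filter (fun j => xs j = 0), x j
    + ∑ j ∈ Finset.univ.filter (fun j => xs j = 1), (1 - x j)

/-- The non-supporting no-good optimality cut, built from any lower bound
`q` with `L ≤ q ≤ Q(x*)`, is valid on all binary vectors. -/
theorem nonsupporting_nogood_cut_valid
    {n : ℕ} (Q : (Fin n → ℝ) → ℝ) (xs : Fin n → ℝ)
    (hxs : ∀ j, xs j = 0 ∨ xs j = 1) (L q : ℝ)
    (hL : ∀ x : Fin n → ℝ, (∀ j, x j = 0 ∨ x j = 1) → L ≤ Q x)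
    (hLq : L ≤ q) (hq : q ≤ Q xs) :
    ∀ x : Fin n → ℝ, (∀ j, x j = 0 ∨ x j = 1) →
      q + (L - q) * ngDelta x xs ≤ Q x := by
  intro x hx
  have h1nn : ∀ j ∈ Finset.univ.filter (fun j => xs j = 0), (0:ℝ) ≤ x j := by
    intro j _
    rcases hx j with h | h <;> simp [h]
  have h2nn : ∀ j ∈ Finset.univ.filter (fun j => xs j = 1), (0:ℝ) ≤ 1 - x j := by
    intro j _
    rcases hx j with h | h <;> simp [h]
  by_cases hxe : x = xs
  · subst hxe
    have hΔ : ngDelta x x = 0 := by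
      unfold ngDelta
      have a : ∑ j ∈ Finset.univ.filter (fun j => x j = 0), x j = 0 :=
        Finset.sum_eq_zero (fun j hj => by
          simp only [Finset.mem_filter] at hj; simp [hj.2])
      have b : ∑ j ∈ Finset.univ.filter (fun j => x j = 1), (1 - x j) = 0 :=
        Finset.sum_eq_zero (fun j hj => by
          simp only [Finset.mem_filter] at hj; simp [hj.2])
      rw [a, b, add_zero]
    rw [hΔ]
    simpa using hq
  · obtain ⟨j, hj⟩ : ∃ j, x j ≠ xs j := by
      by_contra h
      push_neg at h
      exact hxe (funext h)
    have hΔ : (1:ℝ) ≤ ngDelta x xs := by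
      unfold ngDelta
      rcases hxs j with h0 | h1
      · have hxj : x j = 1 := (hx j).resolve_left (fun h => hj (h.trans h0.symm))
        have : (1:ℝ) ≤ ∑ j ∈ Finset.univ.filter (fun j => xs j = 0), x j := by
          have := Finset.single_le_sum h1nn (by simp [h0] : j ∈ Finset.univ.filter (fun j => xs j = 0))
          rwa [hxj] at this
        have h2 := Finset.sum_nonneg h2nn
        linarith
      · have hxj : x j = 0 := (hx j).resolve_right (fun h => hj (h.trans h1.symm))
        have : (1:ℝ) ≤ ∑ j ∈ Finset.univ.filter (fun j => xs j = 1), (1 - x j) := by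
          have := Finset.single_le_sum h2nn (by simp [h1] : j ∈ Finset.univ.filter (fun j => xs j = 1))
          rw [hxj] at this
          simpa using this
        have h1 := Finset.sum_nonneg h1nn
        linarith
    have hmul : (L - q) * ngDelta x xs ≤ (L - q) * 1 :=
      mul_le_mul_of_nonpos_left hΔ (by linarith)
    have := hL x hx
    nlinarith
end

section
/- Let Q : {0,1}^n → ℝ, x* ∈ {0,1}^n, L ∈ ℝ with L ≤ Q(x) for all x ∈ {0,1}^n, and q ∈ ℝ with L ≤ q ≤ Q(x*). Suppose η* ∈ ℝ satisfies η* < q. Then the non-supporting no-good optimality cut η ≥ q + (L − q) · Δ(x, x*) is separating for the point (x*, η*): it is violated at (x*, η*), i.e. η* < q + (L − q) · Δ(x*, x*), while every pair (x, Q(x)) with x ∈ {0,1}^n satisfies it, i.e. Q(x) ≥ q + (L − q) · Δ(x, x*). -/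
open Finset

lemma ngDelta_self {n : ℕ} (xs : Fin n → ℝ) : ngDelta xs xs = 0 := by
  have h1 : ∑ j ∈ Finset.univ.filter (fun j => xs j = 0), xs j = 0 :=
    Finset.sum_eq_zero fun j hj => (Finset.mem_filter.mp hj).2
  have h2 : ∑ j ∈ Finset.univ.filter (fun j => xs j = 1), (1 - xs j) = 0 :=
    Finset.sum_eq_zero fun j hj => by rw [(Finset.mem_filter.mp hj).2]; ring
  unfold ngDelta
  rw [h1, h2]; ring

/-- If `η* < q`, the non-supporting no-good optimality cut is separating for `(x*, η*)`:
it is violated at `(x*, η*)` while every pair `(x, Q(x))` with `x` binary satisfies it. -/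
theorem nonsupporting_nogood_cut_separating
    {n : ℕ} (Q : (Fin n → ℝ) → ℝ) (xs : Fin n → ℝ)
    (hxs : ∀ j, xs j = 0 ∨ xs j = 1) (L q : ℝ)
    (hL : ∀ x : Fin n → ℝ, (∀ j, x j = 0 ∨ x j = 1) → L ≤ Q x)
    (hLq : L ≤ q) (hq : q ≤ Q xs)
    (ηs : ℝ) (hη : ηs < q) :
    ηs < q + (L - q) * ngDelta xs xs ∧
      ∀ x : Fin n → ℝ, (∀ j, x j = 0 ∨ x j = 1) →
        q + (L - q) * ngDelta x xs ≤ Q x := by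
  constructor
  · rw [ngDelta_self]; simpa using hη
  · intro x hx
    have h1 : (0:ℝ) ≤ ∑ j ∈ Finset.univ.filter (fun j => xs j = 0), x j :=
      Finset.sum_nonneg fun j _ => (hx j).elim (fun h => h.ge) (fun h => by rw [h]; norm_num)
    have h2 : (0:ℝ) ≤ ∑ j ∈ Finset.univ.filter (fun j => xs j = 1), (1 - x j) :=
      Finset.sum_nonneg fun j _ => (hx j).elim (fun h => by rw [h]; norm_num)
        (fun h => by rw [h]; norm_num)
    by_cases hxe : x = xs
    · subst hxe
      rw [ngDelta_self]
      simpa using le_trans hq (le_of_eq rfl) |>.trans_eq rfl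
    · have hd1 : (1:ℝ) ≤ ngDelta x xs := by
        obtain ⟨j, hj⟩ : ∃ j, x j ≠ xs j := by
          by_contra h; push_neg at h; exact hxe (funext h)
        rcases hxs j with h0 | h1'
        · have hx1 : x j = 1 := (hx j).resolve_left (by rw [h0] at hj; exact hj)
          have : (1:ℝ) ≤ ∑ j ∈ Finset.univ.filter (fun j => xs j = 0), x j := by
            refine hx1 ▸ Finset.single_le_sum (f := x) ?_ ?_
            · intro i _; exact (hx i).elim (fun h => h.ge) (fun h => by rw [h]; norm_num)
            · simp [h0]
          unfold ngDelta; linarith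
        · have hx0 : x j = 0 := (hx j).resolve_right (by rw [h1'] at hj; exact hj)
          have : (1:ℝ) ≤ ∑ j ∈ Finset.univ.filter (fun j => xs j = 1), (1 - x j) := by
            have := Finset.single_le_sum (f := fun i => 1 - x i)
              (s := Finset.univ.filter (fun j => xs j = 1))
              (fun i _ => (hx i).elim (fun h => by simp [h]) (fun h => by simp [h]))
              (Finset.mem_filter.mpr ⟨Finset.mem_univ j, h1'⟩)
            simp only [hx0] at this ⊢; linarith
          unfold ngDelta; linarith
      have : (L - q) * ngDelta x xs ≤ (L - q) * 1 :=
        mul_le_mul_of_nonpos_left hd1 (by linarith)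
      have hLx := hL x hx
      nlinarith
end
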